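/- Let ψ(x) = A sin(x) + A^3 sin(3x)/(2(1-3^α)) and c = -1 + (3/2)A^2. Then the residual D^α ψ + c ψ - 2ψ^3 is of order O(A^5) as A → 0; more precisely, the coefficients of A and A^3 in the Fourier expansion of the residual vanish identically. -/
import Mathlib


open Real

/-- The Stokes approximation of the odd periodic wave. -/
noncomputable def stokesPsi (α A x : ℝ) : ℝ :=
  A * Real.sin x + A ^ 3 * Real.sin (3 * x) / (2 * (1 - (3:ℝ) ^ α))

/-- The action of the fractional Laplacian `D^α` on `stokesPsi`, using
`D^α sin (n x) = n^α sin (n x)` for `n ≥ 1`. -/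
noncomputable def stokesDPsi (α A x : ℝ) : ℝ :=
  A * (1:ℝ) ^ α * Real.sin x +
    A ^ 3 * (3:ℝ) ^ α * Real.sin (3 * x) / (2 * (1 - (3:ℝ) ^ α))

/-- The Stokes approximation of the wave speed. -/
noncomputable def stokesC (A : ℝ) : ℝ := -1 + 3 / 2 * A ^ 2

/-- The residual of the stationary equation `D^α ψ + c ψ - 2 ψ^3`. -/
noncomputable def stokesRes (α A x : ℝ) : ℝ :=
  stokesDPsi α A x + stokesC A * stokesPsi α A x - 2 * (stokesPsi α A x) ^ 3

/-- The residual of the Stokes expansion is `O(A^5)`: the coefficients of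
`A` and `A^3` in its expansion vanish identically, so the residual is
`A^5` times a continuous function of `(A, x)`. -/
theorem stokes_residual_order_five (α : ℝ) (hα : 1 / 2 < α) :
    ∃ g : ℝ → ℝ → ℝ, Continuous (fun p : ℝ × ℝ => g p.1 p.2) ∧
      ∀ A x : ℝ, stokesRes α A x = A ^ 5 * g A x := by
  set β : ℝ := 1 / (2 * (1 - (3:ℝ) ^ α)) with hβ
  refine ⟨fun A x => 3 / 2 * β * Real.sin (3 * x)
      - 6 * (Real.sin x) ^ 2 * β * Real.sin (3 * x)
      - 6 * A ^ 2 * Real.sin x * β ^ 2 * (Real.sin (3 * x)) ^ 2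
      - 2 * A ^ 4 * β ^ 3 * (Real.sin (3 * x)) ^ 3, ?_, ?_⟩
  · fun_prop
  · intro A x
    have h3 : (1:ℝ) < (3:ℝ) ^ α := by
      have : (3:ℝ) ^ (0:ℝ) < (3:ℝ) ^ α :=
        Real.rpow_lt_rpow_left_iff (by norm_num) |>.mpr (by linarith)
      simpa using this
    have hne : 1 - (3:ℝ) ^ α ≠ 0 := by linarith
    simp only [stokesRes, stokesDPsi, stokesPsi, stokesC, Real.one_rpow, hβ,
      Real.sin_three_mul]
    field_simp
    ring
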